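/- arXiv:1609.07919 — 3 statements merged into one kernel-verified Lean document; each statement's English description precedes it below -/
import Mathlib

section
/- Let m be an even positive integer and let A and B be m-th order n-dimensional real symmetric Z-tensors. If A ≤ B entrywise (i.e., a_{i_1...i_m} ≤ b_{i_1...i_m} for all indices) and A is positive semi-definite, then B is positive semi-definite. -/
open scoped BigOperators

/-- `A x^m`: the homogeneous form of an `m`-th order `n`-dimensional tensor. -/
def tApply {m n : ℕ} (A : (Fin m → Fin n) → ℝ) (x : Fin n → ℝ) : ℝ :=
  ∑ i : Fin m → Fin n, A i * ∏ t, x (i t)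

/-- A tensor is symmetric if its entries are invariant under permutations of indices. -/
def IsSymT {m n : ℕ} (A : (Fin m → Fin n) → ℝ) : Prop :=
  ∀ (σ : Equiv.Perm (Fin m)) (i : Fin m → Fin n), A (i ∘ σ) = A i

/-- A `Z`-tensor: all off-diagonal entries are nonpositive. -/
def IsZTensor {m n : ℕ} (A : (Fin m → Fin n) → ℝ) : Prop :=
  ∀ i : Fin m → Fin n, (∃ s t, i s ≠ i t) → A i ≤ 0

/-- Positive semi-definiteness (for even order): `A x^m ≥ 0` for all `x ∈ ℝ^n`. -/
def PSDT {m n : ℕ} (A : (Fin m → Fin n) → ℝ) : Prop :=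
  ∀ x : Fin n → ℝ, 0 ≤ tApply A x

/-!
Comparing `A |x|^m` with `B x^m` term by term: on an off-diagonal index `B` is nonpositive, so
`A_i ∏ |x| ≤ B_i ∏ |x| ≤ B_i ∏ x`; on a diagonal index the monomial is `x_c ^ m ≥ 0` because `m`
is even. Hence `0 ≤ A |x|^m ≤ B x^m`.
-/

theorem prod_nonneg_of_even_card_of_const {ι α R : Type*} [Fintype ι]
    [CommRing R] [LinearOrder R] [IsStrictOrderedRing R]
    (hι : Even (Fintype.card ι)) (i : ι → α) (hi : ∀ s t, i s = i t) (x : α → R) :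
    0 ≤ ∏ t, x (i t) := by
  rcases isEmpty_or_nonempty ι with _ | hnonempty
  · simp
  · obtain ⟨t₀⟩ := hnonempty
    rw [Finset.prod_congr rfl fun t _ => congrArg x (hi t t₀), Finset.prod_const,
      Finset.card_univ]
    exact hι.pow_nonneg _

theorem entry_mul_prod_abs_le {m n : ℕ} (hm : Even m) {A B : (Fin m → Fin n) → ℝ}
    (hZB : IsZTensor B) (hle : ∀ i, A i ≤ B i) (x : Fin n → ℝ) (i : Fin m → Fin n) :
    A i * ∏ t, |x (i t)| ≤ B i * ∏ t, x (i t) := by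
  rw [← Finset.abs_prod]
  by_cases hoff : ∃ s t, i s ≠ i t
  · calc A i * |∏ t, x (i t)|
        ≤ B i * |∏ t, x (i t)| := mul_le_mul_of_nonneg_right (hle i) (abs_nonneg _)
      _ ≤ B i * ∏ t, x (i t) := mul_le_mul_of_nonpos_left (le_abs_self _) (hZB i hoff)
  · push Not at hoff
    have hprod : 0 ≤ ∏ t, x (i t) :=
      prod_nonneg_of_even_card_of_const (by simpa using hm) i hoff x
    rw [abs_of_nonneg hprod]
    exact mul_le_mul_of_nonneg_right (hle i) hprod

theorem tApply_abs_le_of_le {m n : ℕ} (hm : Even m) {A B : (Fin m → Fin n) → ℝ}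
    (hZB : IsZTensor B) (hle : ∀ i, A i ≤ B i) (x : Fin n → ℝ) :
    tApply A (fun j => |x j|) ≤ tApply B x :=
  Finset.sum_le_sum fun i _ => entry_mul_prod_abs_le hm hZB hle x i

theorem stmt6_general (m n : ℕ) (hm : Even m)
    (A B : (Fin m → Fin n) → ℝ)
    (hZB : IsZTensor B)
    (hle : ∀ i : Fin m → Fin n, A i ≤ B i) (hpsd : PSDT A) :
    PSDT B := fun x =>
  (hpsd fun j => |x j|).trans (tApply_abs_le_of_le hm hZB hle x)

theorem stmt6 (m n : ℕ) (hm : Even m) (hm0 : 0 < m)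
    (A B : (Fin m → Fin n) → ℝ) (hA : IsSymT A) (hB : IsSymT B)
    (hZA : IsZTensor A) (hZB : IsZTensor B)
    (hle : ∀ i : Fin m → Fin n, A i ≤ B i) (hpsd : PSDT A) :
    PSDT B :=
  stmt6_general m n hm A B hZB hle hpsd
end

section
/- Let m be an odd positive integer and define H_2 = {A : A is an m-th order n-dimensional real symmetric tensor with A − N(A) copositive}. Then H_2 is a convex cone of symmetric tensors, and N^+_{m,n} ⊆ H_2 ⊆ COP_{m,n}, where N^+_{m,n} is the set of m-th order n-dimensional symmetric tensors with all entries nonnegative and COP_{m,n} is the set of m-th order n-dimensional symmetric copositive tensors. -/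
open scoped BigOperators

/-- Copositivity: `A x^m ≥ 0` for all `x` in the nonnegative orthant. -/
def Copositive {m n : ℕ} (A : (Fin m → Fin n) → ℝ) : Prop :=
  ∀ x : Fin n → ℝ, (∀ j, 0 ≤ x j) → 0 ≤ tApply A x

/-- `N(A)`: keeps the positive off-diagonal entries of `A` and sets all the other
entries to `0`. -/
noncomputable def NPart {m n : ℕ} (A : (Fin m → Fin n) → ℝ) : (Fin m → Fin n) → ℝ :=
  fun i => if 0 < A i ∧ (∃ s t, i s ≠ i t) then A i else 0

/-! Entrywise, `N(A)` is the positive part of `A` off the diagonal and `0` on it, so `N` is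
positively homogeneous and subadditive. Hence `A ↦ A - N(A)` is superadditive, and since
copositivity is preserved by sums, nonnegative scalings and entrywise increase, `H₂` is a convex
cone. `A - N(A) ≤ A` gives `H₂ ⊆ COP`, and a nonnegative `A` has `A - N(A) ≥ 0`. -/

variable {m n : ℕ}

lemma tApply_add (A B : (Fin m → Fin n) → ℝ) (x : Fin n → ℝ) :
    tApply (A + B) x = tApply A x + tApply B x := by
  simp only [tApply, Pi.add_apply, add_mul, Finset.sum_add_distrib]

lemma tApply_smul (c : ℝ) (A : (Fin m → Fin n) → ℝ) (x : Fin n → ℝ) :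
    tApply (c • A) x = c * tApply A x := by
  simp only [tApply, Pi.smul_apply, smul_eq_mul, Finset.mul_sum, mul_assoc]

lemma tApply_mono {A B : (Fin m → Fin n) → ℝ} (h : A ≤ B) {x : Fin n → ℝ}
    (hx : ∀ j, 0 ≤ x j) : tApply A x ≤ tApply B x :=
  Finset.sum_le_sum fun i _ =>
    mul_le_mul_of_nonneg_right (h i) (Finset.prod_nonneg fun _ _ => hx _)

lemma IsSymT.add {A B : (Fin m → Fin n) → ℝ} (hA : IsSymT A) (hB : IsSymT B) :
    IsSymT (A + B) :=
  fun σ i => by simp only [Pi.add_apply, hA σ i, hB σ i]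

lemma IsSymT.smul {A : (Fin m → Fin n) → ℝ} (c : ℝ) (hA : IsSymT A) : IsSymT (c • A) :=
  fun σ i => by simp only [Pi.smul_apply, hA σ i]

lemma Copositive.add {A B : (Fin m → Fin n) → ℝ} (hA : Copositive A) (hB : Copositive B) :
    Copositive (A + B) :=
  fun x hx => (tApply_add A B x).symm ▸ add_nonneg (hA x hx) (hB x hx)

lemma Copositive.smul {A : (Fin m → Fin n) → ℝ} {c : ℝ} (hc : 0 ≤ c) (hA : Copositive A) :
    Copositive (c • A) :=
  fun x hx => (tApply_smul c A x).symm ▸ mul_nonneg hc (hA x hx)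

lemma Copositive.mono {A B : (Fin m → Fin n) → ℝ} (hA : Copositive A) (h : A ≤ B) :
    Copositive B :=
  fun x hx => (hA x hx).trans (tApply_mono h hx)

lemma copositive_of_nonneg {A : (Fin m → Fin n) → ℝ} (hA : 0 ≤ A) : Copositive A :=
  fun _ hx => Finset.sum_nonneg fun i _ =>
    mul_nonneg (hA i) (Finset.prod_nonneg fun _ _ => hx _)

lemma NPart_apply (A : (Fin m → Fin n) → ℝ) (i : Fin m → Fin n) :
    NPart A i = if ∃ s t, i s ≠ i t then max (A i) 0 else 0 := by
  unfold NPart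
  by_cases hA : 0 < A i <;> by_cases hi : ∃ s t, i s ≠ i t <;>
    simp [hA, hi, le_of_lt, not_lt.mp]

lemma NPart_nonneg (A : (Fin m → Fin n) → ℝ) : 0 ≤ NPart A := fun i => by
  rw [NPart_apply]
  split_ifs
  exacts [le_max_right _ _, le_rfl]

lemma NPart_add_le (A B : (Fin m → Fin n) → ℝ) : NPart (A + B) ≤ NPart A + NPart B :=
  fun i => by
    simp only [Pi.add_apply, NPart_apply]
    split_ifs
    · exact max_le (add_le_add (le_max_left _ _) (le_max_left _ _))
        (add_nonneg (le_max_right _ _) (le_max_right _ _))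
    · simp

lemma NPart_smul {c : ℝ} (hc : 0 ≤ c) (A : (Fin m → Fin n) → ℝ) :
    NPart (c • A) = c • NPart A := funext fun i => by
  simp only [Pi.smul_apply, smul_eq_mul, NPart_apply]
  split_ifs
  · rw [mul_max_of_nonneg _ _ hc, mul_zero]
  · rw [mul_zero]

lemma sub_NPart_nonneg {A : (Fin m → Fin n) → ℝ} (hA : ∀ i, 0 ≤ A i) : 0 ≤ A - NPart A :=
  fun i => by
    simp only [Pi.zero_apply, Pi.sub_apply, NPart_apply]
    split_ifs
    · rw [max_eq_left (hA i), sub_self]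
    · simpa using hA i

lemma Copositive.sub_NPart_add {A B : (Fin m → Fin n) → ℝ} (hA : Copositive (A - NPart A))
    (hB : Copositive (B - NPart B)) : Copositive (A + B - NPart (A + B)) :=
  (hA.add hB).mono fun i => by
    have := NPart_add_le A B i
    simp only [Pi.add_apply, Pi.sub_apply] at this ⊢
    linarith

lemma Copositive.sub_NPart_smul {A : (Fin m → Fin n) → ℝ} {c : ℝ} (hc : 0 ≤ c)
    (hA : Copositive (A - NPart A)) : Copositive (c • A - NPart (c • A)) := by
  rw [NPart_smul hc, ← smul_sub]
  exact hA.smul hc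

lemma Copositive.of_sub_NPart {A : (Fin m → Fin n) → ℝ} (hA : Copositive (A - NPart A)) :
    Copositive A :=
  hA.mono (sub_le_self A (NPart_nonneg A))

theorem stmt8_general (m n : ℕ)
    (H2 : Set ((Fin m → Fin n) → ℝ))
    (hH2 : H2 = {A | IsSymT A ∧ Copositive (A - NPart A)}) :
    Convex ℝ H2 ∧ (∀ (c : ℝ), 0 ≤ c → ∀ A ∈ H2, c • A ∈ H2) ∧
      {A : (Fin m → Fin n) → ℝ | IsSymT A ∧ ∀ i, 0 ≤ A i} ⊆ H2 ∧
      H2 ⊆ {A : (Fin m → Fin n) → ℝ | IsSymT A ∧ Copositive A} := by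
  have hsmul : ∀ c : ℝ, 0 ≤ c → ∀ A ∈ H2, c • A ∈ H2 := by
    rintro c hc A hA
    rw [hH2] at hA ⊢
    exact ⟨hA.1.smul c, hA.2.sub_NPart_smul hc⟩
  have hadd : ∀ A ∈ H2, ∀ B ∈ H2, A + B ∈ H2 := by
    rintro A hA B hB
    rw [hH2] at hA hB ⊢
    exact ⟨hA.1.add hB.1, hA.2.sub_NPart_add hB.2⟩
  refine ⟨fun A hA B hB a b ha hb _ => hadd _ (hsmul a ha A hA) _ (hsmul b hb B hB), hsmul,
    ?_, ?_⟩
  · rintro A ⟨hAs, hA⟩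
    rw [hH2]
    exact ⟨hAs, copositive_of_nonneg (sub_NPart_nonneg hA)⟩
  · rw [hH2]
    rintro A ⟨hAs, hAc⟩
    exact ⟨hAs, hAc.of_sub_NPart⟩

theorem stmt8 (m n : ℕ) (hm : Odd m)
    (H2 : Set ((Fin m → Fin n) → ℝ))
    (hH2 : H2 = {A | IsSymT A ∧ Copositive (A - NPart A)}) :
    Convex ℝ H2 ∧ (∀ (c : ℝ), 0 ≤ c → ∀ A ∈ H2, c • A ∈ H2) ∧
      {A : (Fin m → Fin n) → ℝ | IsSymT A ∧ ∀ i, 0 ≤ A i} ⊆ H2 ∧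
      H2 ⊆ {A : (Fin m → Fin n) → ℝ | IsSymT A ∧ Copositive A} :=
  stmt8_general m n H2 hH2
end

section
/- Let G = (V, E) be a nontrivial m-uniform hypergraph with |V| = n, where m ≥ 3 and n ≥ m, and let ω(G) denote its coclique number. Then ω(G)^{m−1} equals the maximum of ⟨X, E_tensor⟩ over all m-th order n-dimensional completely positive tensors X satisfying X_{i_1...i_m} = 0 whenever {i_1,...,i_m} ∈ E and ⟨X, I⟩ = 1, where E_tensor is the all-ones tensor and I is the identity tensor; moreover this maximum is attained. -/
open scoped BigOperators

/-- A coclique of an `m`-uniform hypergraph with edge set `E`: a set of vertices no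
`m`-element subset of which is an edge. -/
def IsCoclique {n : ℕ} (m : ℕ) (E : Finset (Finset (Fin n))) (S : Finset (Fin n)) : Prop :=
  ∀ T : Finset (Fin n), T ⊆ S → T.card = m → T ∉ E

/-- Inner product of two tensors. -/
def tInner {m n : ℕ} (A B : (Fin m → Fin n) → ℝ) : ℝ :=
  ∑ i : Fin m → Fin n, A i * B i

/-- A completely positive tensor: a finite sum of symmetric rank-one tensors
`u ∘ u ∘ ⋯ ∘ u` with `u ∈ ℝ^n_+`. -/
def CompletelyPositive {m n : ℕ} (X : (Fin m → Fin n) → ℝ) : Prop :=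
  ∃ (N : ℕ) (u : Fin N → Fin n → ℝ), (∀ p j, 0 ≤ u p j) ∧
    ∀ i : Fin m → Fin n, X i = ∑ p, ∏ t, u p (i t)

/-- The identity tensor: entry `1` on the diagonal, `0` elsewhere. -/
def idT (m n : ℕ) : (Fin m → Fin n) → ℝ :=
  fun i => if ∀ s t, i s = i t then 1 else 0

/-!
A completely positive tensor is `X = ∑ₚ uₚ^{⊗m}` with `uₚ ≥ 0`, so `⟨X, 𝟙⟩ = ∑ₚ (∑ⱼ uₚⱼ)^m`
and `⟨X, I⟩ = ∑ₚ ∑ⱼ uₚⱼ^m`. Since the summands are nonnegative, `X` vanishing on the edges forces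
the support of every `uₚ` to be a coclique, and the power-mean inequality on a support of size at
most `ω` gives `(∑ⱼ uₚⱼ)^m ≤ ω^{m-1} ∑ⱼ uₚⱼ^m`. Equality is attained by the single rank-one tensor
of `ω^{-1/m} 𝟙_S` for a maximum coclique `S`.
-/

open Finset

def rankOneSum (m : ℕ) {N n : ℕ} (u : Fin N → Fin n → ℝ) : (Fin m → Fin n) → ℝ :=
  fun i => ∑ p, ∏ t, u p (i t)

lemma sum_pow_eq_sum_prod {ι R : Type*} [Fintype ι] [CommSemiring R] (f : ι → R) (m : ℕ) :
    (∑ j, f j) ^ m = ∑ i : Fin m → ι, ∏ t, f (i t) := by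
  classical
  rw [sum_pow', Fintype.piFinset_univ]

lemma sum_pow_le_card_support_pow_mul_sum_pow {ι : Type*} [Fintype ι] {m k : ℕ} (hm : 0 < m)
    {u : ι → ℝ} (hu : ∀ j, 0 ≤ u j) (hk : #{j | u j ≠ 0} ≤ k) :
    (∑ j, u j) ^ m ≤ (k : ℝ) ^ (m - 1) * ∑ j, u j ^ m := by
  obtain ⟨m, rfl⟩ : ∃ m', m = m' + 1 := ⟨m - 1, by omega⟩
  calc (∑ j, u j) ^ (m + 1) = (∑ j ∈ {j | u j ≠ 0}, u j) ^ (m + 1) := by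
        rw [sum_filter_ne_zero]
    _ ≤ (#{j | u j ≠ 0} : ℝ) ^ m * ∑ j ∈ {j | u j ≠ 0}, u j ^ (m + 1) :=
        pow_sum_le_card_mul_sum_pow (fun j _ => hu j) m
    _ ≤ (k : ℝ) ^ (m + 1 - 1) * ∑ j, u j ^ (m + 1) := by
        rw [Nat.add_sub_cancel]
        exact mul_le_mul (pow_le_pow_left₀ (by positivity) (by exact_mod_cast hk) m)
          (sum_le_sum_of_subset_of_nonneg (subset_univ _) fun j _ _ => pow_nonneg (hu j) _)
          (sum_nonneg fun j _ => pow_nonneg (hu j) _) (by positivity)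

lemma tInner_idT {m n : ℕ} (hm : 0 < m) (X : (Fin m → Fin n) → ℝ) :
    tInner X (idT m n) = ∑ j, X (fun _ => j) := by
  classical
  have hdiag : ({i | ∀ s t, i s = i t} : Finset (Fin m → Fin n)) = univ.image fun j _ => j := by
    ext i
    simp only [mem_filter, mem_univ, true_and, mem_image]
    exact ⟨fun h => ⟨i ⟨0, hm⟩, funext fun t => h _ _⟩, fun ⟨j, hj⟩ => hj ▸ fun _ _ => rfl⟩
  simp only [tInner, idT, mul_ite, mul_one, mul_zero, ← sum_filter, hdiag]
  exact sum_image fun j _ k _ h => congrFun h ⟨0, hm⟩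

lemma tInner_rankOneSum_one {m N n : ℕ} (u : Fin N → Fin n → ℝ) :
    tInner (rankOneSum m u) (fun _ => 1) = ∑ p, (∑ j, u p j) ^ m := by
  simp only [tInner, rankOneSum, mul_one, sum_pow_eq_sum_prod]
  exact sum_comm

lemma tInner_rankOneSum_idT {m N n : ℕ} (hm : 0 < m) (u : Fin N → Fin n → ℝ) :
    tInner (rankOneSum m u) (idT m n) = ∑ p, ∑ j, u p j ^ m := by
  simp only [tInner_idT hm, rankOneSum, prod_const, card_univ, Fintype.card_fin]
  exact sum_comm

lemma isCoclique_of_card_lt {m n : ℕ} (E : Finset (Finset (Fin n))) {S : Finset (Fin n)}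
    (hS : #S < m) : IsCoclique m E S :=
  fun _ hT hTm _ => (card_le_card hT).not_gt (hTm ▸ hS)

lemma isCoclique_support_of_rankOneSum {m N n : ℕ} {E : Finset (Finset (Fin n))}
    {u : Fin N → Fin n → ℝ} (hu : ∀ p j, 0 ≤ u p j)
    (hE : ∀ i : Fin m → Fin n, univ.image i ∈ E → rankOneSum m u i = 0) (p : Fin N) :
    IsCoclique m E {j | u p j ≠ 0} := by
  intro T hT hTm hTE
  have himage : univ.image (T.orderEmbOfFin hTm) = T := T.image_orderEmbOfFin_univ hTm
  have hterm : ∏ t, u p (T.orderEmbOfFin hTm t) = 0 :=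
    (sum_eq_zero_iff_of_nonneg fun q _ => prod_nonneg fun t _ => hu q _).mp
      (hE _ (by rwa [himage])) p (mem_univ p)
  obtain ⟨t, -, ht⟩ := prod_eq_zero_iff.mp hterm
  exact (mem_filter.mp (hT (T.orderEmbOfFin_mem hTm t))).2 ht

lemma tInner_one_le_of_forall_isCoclique_card_le {m n : ℕ} (hm : 0 < m)
    {E : Finset (Finset (Fin n))} {ω : ℕ} (hω : ∀ S, IsCoclique m E S → #S ≤ ω)
    {X : (Fin m → Fin n) → ℝ} (hX : CompletelyPositive X)
    (hE : ∀ i : Fin m → Fin n, univ.image i ∈ E → X i = 0) :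
    tInner X (fun _ => 1) ≤ (ω : ℝ) ^ (m - 1) * tInner X (idT m n) := by
  obtain ⟨N, u, hu, hXu⟩ := hX
  obtain rfl : X = rankOneSum m u := funext hXu
  rw [tInner_rankOneSum_one, tInner_rankOneSum_idT hm, mul_sum]
  exact sum_le_sum fun p _ => sum_pow_le_card_support_pow_mul_sum_pow hm (hu p)
    (hω _ (isCoclique_support_of_rankOneSum hu hE p))

lemma exists_completelyPositive_of_isCoclique {m n : ℕ} (hm : 0 < m)
    {E : Finset (Finset (Fin n))} (hunif : ∀ e ∈ E, #e = m) {S : Finset (Fin n)}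
    (hS : IsCoclique m E S) (hSne : S.Nonempty) :
    ∃ X : (Fin m → Fin n) → ℝ, CompletelyPositive X ∧
      (∀ i : Fin m → Fin n, univ.image i ∈ E → X i = 0) ∧
      tInner X (idT m n) = 1 ∧ (#S : ℝ) ^ (m - 1) = tInner X (fun _ => 1) := by
  have hS0 : (#S : ℝ) ≠ 0 := by exact_mod_cast hSne.card_ne_zero
  set a : ℝ := (#S : ℝ)⁻¹ ^ (m : ℝ)⁻¹
  have ham : a ^ m = (#S : ℝ)⁻¹ := Real.rpow_inv_natCast_pow (by positivity) hm.ne'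
  set u : Fin 1 → Fin n → ℝ := fun _ j => if j ∈ S then a else 0
  refine ⟨rankOneSum m u, ⟨1, u, fun _ j => by positivity, fun _ => rfl⟩, ?_, ?_, ?_⟩
  · intro i hi
    obtain ⟨j, hj, hjS⟩ := not_subset.mp fun h => hS _ h (hunif _ hi) hi
    obtain ⟨t, -, rfl⟩ := mem_image.mp hj
    exact sum_eq_zero fun p _ => prod_eq_zero (mem_univ t) (if_neg hjS)
  · simp [tInner_rankOneSum_idT hm, u, ite_pow, zero_pow hm.ne', ham, hS0]
  · simp [tInner_rankOneSum_one, u, mul_pow, ham, pow_sub₀ _ hS0 (Nat.one_le_of_lt hm)]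

theorem stmt12_general (m n : ℕ) (hm : 3 ≤ m) (hn : m ≤ n)
    (E : Finset (Finset (Fin n))) (hunif : ∀ e ∈ E, e.card = m)
    (ω : ℕ)
    (hω : IsGreatest {k | ∃ S : Finset (Fin n), IsCoclique m E S ∧ S.card = k} ω) :
    IsGreatest
      {v : ℝ | ∃ X : (Fin m → Fin n) → ℝ, CompletelyPositive X ∧
        (∀ i : Fin m → Fin n, Finset.image i Finset.univ ∈ E → X i = 0) ∧
        tInner X (idT m n) = 1 ∧ v = tInner X (fun _ => 1)}
      ((ω : ℝ) ^ (m - 1)) := by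
  have hm0 : 0 < m := by omega
  obtain ⟨S, hS, rfl⟩ := hω.1
  have hmax : ∀ T, IsCoclique m E T → #T ≤ #S := fun T hT => hω.2 ⟨T, hT, rfl⟩
  have hSne : S.Nonempty := card_pos.mp <|
    (hmax {⟨0, by omega⟩} (isCoclique_of_card_lt E (by simp; omega))).trans_lt' one_pos
  refine ⟨exists_completelyPositive_of_isCoclique hm0 hunif hS hSne, ?_⟩
  rintro v ⟨X, hX, hE, htrace, rfl⟩
  simpa [htrace] using tInner_one_le_of_forall_isCoclique_card_le hm0 hmax hX hE

theorem stmt12 (m n : ℕ) (hm : 3 ≤ m) (hn : m ≤ n)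
    (E : Finset (Finset (Fin n))) (hunif : ∀ e ∈ E, e.card = m) (hne : E.Nonempty)
    (ω : ℕ)
    (hω : IsGreatest {k | ∃ S : Finset (Fin n), IsCoclique m E S ∧ S.card = k} ω) :
    IsGreatest
      {v : ℝ | ∃ X : (Fin m → Fin n) → ℝ, CompletelyPositive X ∧
        (∀ i : Fin m → Fin n, Finset.image i Finset.univ ∈ E → X i = 0) ∧
        tInner X (idT m n) = 1 ∧ v = tInner X (fun _ => 1)}
      ((ω : ℝ) ^ (m - 1)) :=
  stmt12_general m n hm hn E hunif ω hω
end
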